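/- arXiv:1407.8376 — 2 statements merged into one kernel-verified Lean document; each statement's English description precedes it below -/
import Mathlib

section
/- Fix K, r, r_0 with r_0 < r ≤ K and β ∈ (0,1). With K independent Bernoulli variables where r_0 have success probability β' and K - r_0 have probability β, as β' → 1 the probability that the sum is at least r converges to c(r) = P(BIN(K - r_0, β) ≥ r - r_0), which is strictly less than 1; moreover c(r) is strictly decreasing in r for r_0 < r ≤ K. -/
open Filter

/-- The probability that at least `r` of `K` independent Bernoulli trials with
success probabilities `p i` succeed. -/
noncomputable def bernoulliSumTail {K : ℕ} (p : Fin K → ℝ) (r : ℕ) : ℝ :=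
  ∑ S ∈ Finset.univ.powerset.filter (fun S : Finset (Fin K) => r ≤ S.card),
    (∏ i ∈ S, p i) * ∏ i ∈ Sᶜ, (1 - p i)

/-- `P(BIN(n, q) ≥ m)`, the upper tail of a Binomial(n, q) distribution. -/
noncomputable def binomTail (n : ℕ) (q : ℝ) (m : ℕ) : ℝ :=
  ∑ i ∈ Finset.Icc m n, (n.choose i : ℝ) * q ^ i * (1 - q) ^ (n - i)

lemma binomTail_term_nonneg (n i : ℕ) {β : ℝ} (hβ : β ∈ Set.Ioo (0:ℝ) 1) :
    0 ≤ (n.choose i : ℝ) * β ^ i * (1 - β) ^ (n - i) := by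
  obtain ⟨h0, h1⟩ := hβ
  have h2 : (0:ℝ) ≤ 1 - β := by linarith
  positivity

lemma binomTail_term_pos (n i : ℕ) (hi : i ≤ n) {β : ℝ} (hβ : β ∈ Set.Ioo (0:ℝ) 1) :
    0 < (n.choose i : ℝ) * β ^ i * (1 - β) ^ (n - i) := by
  obtain ⟨h0, h1⟩ := hβ
  have hc : 0 < (n.choose i : ℝ) := by
    exact_mod_cast Nat.choose_pos hi
  have : (0:ℝ) < 1 - β := by linarith
  positivity

lemma binomTail_lt_one (n m : ℕ) (hm : 1 ≤ m) {β : ℝ} (hβ : β ∈ Set.Ioo (0:ℝ) 1) :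
    binomTail n β m < 1 := by
  have hone : ∑ i ∈ Finset.range (n+1), (n.choose i : ℝ) * β ^ i * (1 - β) ^ (n - i) = 1 := by
    have h := add_pow β (1 - β) n
    have h0 : β + (1 - β) = 1 := by ring
    rw [h0, one_pow] at h
    exact (Finset.sum_congr rfl (fun i _ => by ring)).trans h.symm
  have hlt : binomTail n β m
      < ∑ i ∈ Finset.range (n+1), (n.choose i : ℝ) * β ^ i * (1 - β) ^ (n - i) := by
    rw [binomTail]
    refine Finset.sum_lt_sum_of_subset (i := 0) ?_ ?_ ?_ ?_ ?_
    · intro i hi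
      simp only [Finset.mem_Icc] at hi
      simp only [Finset.mem_range]
      omega
    · simp
    · simp only [Finset.mem_Icc]; omega
    · simpa using binomTail_term_pos n 0 (Nat.zero_le n) hβ
    · intro j _ _
      exact binomTail_term_nonneg n j hβ
  linarith [hlt, hone.le, hone.ge]

lemma binomTail_strict_anti (n m1 m2 : ℕ) (h12 : m1 < m2) (h1n : m1 ≤ n)
    {β : ℝ} (hβ : β ∈ Set.Ioo (0:ℝ) 1) :
    binomTail n β m2 < binomTail n β m1 := by
  unfold binomTail
  apply Finset.sum_lt_sum_of_subset (i := m1)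
  · intro i hi
    simp only [Finset.mem_Icc] at hi ⊢
    omega
  · simp only [Finset.mem_Icc]; omega
  · simp only [Finset.mem_Icc]; omega
  · exact binomTail_term_pos n m1 h1n hβ
  · intro j _ _
    exact binomTail_term_nonneg n j hβ

lemma bernoulliSumTail_at_one (K r r0 : ℕ) (hr0r : r0 < r) (hrK : r ≤ K) (β : ℝ) :
    bernoulliSumTail (fun i : Fin K => if (i : ℕ) < r0 then (1:ℝ) else β) r
      = binomTail (K - r0) β (r - r0) := by
  classical
  set p : Fin K → ℝ := fun i => if (i : ℕ) < r0 then (1:ℝ) else β with hp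
  set A : Finset (Fin K) := Finset.univ.filter (fun i : Fin K => (i : ℕ) < r0) with hAdef
  have hmemA : ∀ i : Fin K, i ∈ A ↔ (i : ℕ) < r0 := by
    intro i; simp [hAdef]
  have hr0K : r0 < K := lt_of_lt_of_le hr0r hrK
  have hA : A.card = r0 := by
    have : A = Finset.map (Fin.castLEEmb hr0K.le) Finset.univ := by
      ext i
      simp only [hmemA, Finset.mem_map, Finset.mem_univ, true_and, Fin.castLEEmb,
        Function.Embedding.coeFn_mk]
      constructor
      · rintro h
        exact ⟨⟨(i : ℕ), h⟩, by ext; simp [Fin.castLE]⟩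
      · rintro ⟨j, rfl⟩
        simpa using j.isLt
    rw [this, Finset.card_map, Finset.card_univ, Fintype.card_fin]
  have hAc : Aᶜ.card = K - r0 := by
    rw [Finset.card_compl, hA, Fintype.card_fin]
  set n := K - r0 with hn
  set m := r - r0 with hm
  set f : Finset (Fin K) → ℝ := fun S => (∏ i ∈ S, p i) * ∏ i ∈ Sᶜ, (1 - p i) with hf
  have step1 : bernoulliSumTail p r
      = ∑ S ∈ Finset.univ.powerset.filter
          (fun S : Finset (Fin K) => r ≤ S.card ∧ A ⊆ S), f S := by
    rw [bernoulliSumTail]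
    refine (Finset.sum_subset ?_ ?_).symm
    · intro S hS
      simp only [Finset.mem_filter, Finset.mem_powerset] at hS ⊢
      exact ⟨hS.1, hS.2.1⟩
    · intro S hS hS'
      simp only [Finset.mem_filter, Finset.mem_powerset] at hS hS'
      have hnsub : ¬ A ⊆ S := by tauto
      obtain ⟨i, hiA, hiS⟩ := Finset.not_subset.mp hnsub
      have hzero : (1 - p i) = 0 := by
        have : (i : ℕ) < r0 := (hmemA i).mp hiA
        simp [hp, this]
      rw [Finset.prod_eq_zero (Finset.mem_compl.mpr hiS) hzero, mul_zero]
  have step2 : ∑ S ∈ Finset.univ.powerset.filter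
        (fun S : Finset (Fin K) => r ≤ S.card ∧ A ⊆ S), f S
      = ∑ T ∈ Aᶜ.powerset.filter (fun T : Finset (Fin K) => m ≤ T.card),
          β ^ T.card * (1 - β) ^ (n - T.card) := by
    apply Finset.sum_nbij' (i := fun S => S \ A) (j := fun T => A ∪ T)
    · intro S hS
      simp only [Finset.mem_filter, Finset.mem_powerset] at hS ⊢
      obtain ⟨_, hSr, hAS⟩ := hS
      constructor
      · intro x hx
        simp only [Finset.mem_sdiff] at hx
        exact Finset.mem_compl.mpr (fun hxA => hx.2 ((hmemA x).mpr ((hmemA x).mp hxA)))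
      · have := Finset.card_sdiff_of_subset hAS
        rw [this, hA]
        omega
    · intro T hT
      simp only [Finset.mem_filter, Finset.mem_powerset] at hT ⊢
      obtain ⟨hTsub, hTm⟩ := hT
      have hdisj : Disjoint A T := by
        rw [Finset.disjoint_left]
        intro x hxA hxT
        exact (Finset.mem_compl.mp (hTsub hxT)) hxA
      refine ⟨Finset.subset_univ _, ?_, Finset.subset_union_left⟩
      rw [Finset.card_union_of_disjoint hdisj, hA]
      omega
    · intro S hS
      simp only [Finset.mem_filter, Finset.mem_powerset] at hS
      exact Finset.union_sdiff_of_subset hS.2.2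
    · intro T hT
      simp only [Finset.mem_filter, Finset.mem_powerset] at hT
      have hdisj : Disjoint A T := by
        rw [Finset.disjoint_left]
        intro x hxA hxT
        exact (Finset.mem_compl.mp (hT.1 hxT)) hxA
      exact Finset.union_sdiff_cancel_left hdisj
    · intro S hS
      simp only [Finset.mem_filter, Finset.mem_powerset] at hS
      obtain ⟨_, hSr, hAS⟩ := hS
      have hprod1 : ∏ i ∈ S, p i = β ^ (S \ A).card := by
        rw [← Finset.prod_sdiff hAS]
        have hA1 : ∏ i ∈ A, p i = 1 := by
          apply Finset.prod_eq_one
          intro i hi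
          simp [hp, (hmemA i).mp hi]
        have hS1 : ∏ i ∈ S \ A, p i = β ^ (S \ A).card := by
          rw [Finset.prod_congr rfl (fun i hi => ?_), Finset.prod_const]
          have : ¬ (i : ℕ) < r0 := fun h => (Finset.mem_sdiff.mp hi).2 ((hmemA i).mpr h)
          simp [hp, this]
        rw [hA1, hS1, mul_one]
      have hprod2 : ∏ i ∈ Sᶜ, (1 - p i) = (1 - β) ^ Sᶜ.card := by
        rw [Finset.prod_congr rfl (fun i hi => ?_), Finset.prod_const]
        have hiS : i ∉ S := Finset.mem_compl.mp hi
        have : ¬ (i : ℕ) < r0 := fun h => hiS (hAS ((hmemA i).mpr h))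
        simp [hp, this]
      have hcS : (S \ A).card = S.card - r0 := by rw [Finset.card_sdiff_of_subset hAS, hA]
      have hcSc : Sᶜ.card = K - S.card := by
        rw [Finset.card_compl, Fintype.card_fin]
      have hSK : S.card ≤ K := by
        simpa using Finset.card_le_card (Finset.subset_univ S)
      have hr0S : r0 ≤ S.card := by
        have := Finset.card_le_card hAS; omega
      have : Sᶜ.card = n - (S \ A).card := by
        rw [hcS, hcSc, hn]; omega
      rw [hf]
      simp only
      rw [hprod1, hprod2, this]
  have step3 : ∑ T ∈ Aᶜ.powerset.filter (fun T : Finset (Fin K) => m ≤ T.card),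
        β ^ T.card * (1 - β) ^ (n - T.card)
      = binomTail n β m := by
    have hset : Aᶜ.powerset.filter (fun T : Finset (Fin K) => m ≤ T.card)
        = (Finset.Icc m n).biUnion (fun j => Finset.powersetCard j Aᶜ) := by
      ext T
      simp only [Finset.mem_filter, Finset.mem_powerset, Finset.mem_biUnion, Finset.mem_Icc,
        Finset.mem_powersetCard]
      constructor
      · rintro ⟨hsub, hcard⟩
        exact ⟨T.card, ⟨hcard, by rw [← hAc]; exact Finset.card_le_card hsub⟩, hsub, rfl⟩
      · rintro ⟨j, ⟨hj1, _⟩, hsub, hcard⟩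
        exact ⟨hsub, by omega⟩
    rw [hset, Finset.sum_biUnion]
    · rw [binomTail]
      apply Finset.sum_congr rfl
      intro j hj
      have : ∀ T ∈ Finset.powersetCard j Aᶜ,
          β ^ T.card * (1 - β) ^ (n - T.card) = β ^ j * (1 - β) ^ (n - j) := by
        intro T hT
        rw [(Finset.mem_powersetCard.mp hT).2]
      rw [Finset.sum_congr rfl this, Finset.sum_const, Finset.card_powersetCard, hAc,
        nsmul_eq_mul]
      ring
    · intro i hi j hj hij
      simp only [Function.onFun]
      rw [Finset.disjoint_left]
      intro T hTi hTj
      exact hij ((Finset.mem_powersetCard.mp hTi).2.symm.trans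
        (Finset.mem_powersetCard.mp hTj).2)
  rw [step1, step2, step3]

/-- Theorem 1 (part 2): if `r0 < r ≤ K` and `β ∈ (0,1)`, then as `β' → 1` the
probability that at least `r` of the Bernoulli trials succeed converges to
`c(r) = P(BIN(K - r0, β) ≥ r - r0) < 1`, and `c(r)` is strictly decreasing in
`r` on `r0 < r ≤ K`. -/
theorem rop_power_tendsto_binomTail
    (K r r0 : ℕ) (hr0r : r0 < r) (hrK : r ≤ K) (β : ℝ) (hβ : β ∈ Set.Ioo (0:ℝ) 1) :
    Tendsto (fun β' : ℝ =>
        bernoulliSumTail (fun i : Fin K => if (i : ℕ) < r0 then β' else β) r)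
      (nhdsWithin 1 (Set.Icc (0:ℝ) 1)) (nhds (binomTail (K - r0) β (r - r0))) ∧
    binomTail (K - r0) β (r - r0) < 1 ∧
    (∀ r1 r2 : ℕ, r0 < r1 → r1 < r2 → r2 ≤ K →
      binomTail (K - r0) β (r2 - r0) < binomTail (K - r0) β (r1 - r0)) := by
  refine ⟨?_, binomTail_lt_one _ _ (by omega) hβ, ?_⟩
  · have hc : Continuous (fun β' : ℝ =>
        bernoulliSumTail (fun i : Fin K => if (i : ℕ) < r0 then β' else β) r) := by
      unfold bernoulliSumTail
      apply continuous_finset_sum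
      intro S _
      apply Continuous.mul
      · apply continuous_finset_prod
        intro i _
        by_cases h : (i : ℕ) < r0 <;> simp only [h, if_true, if_false]
        · exact continuous_id
        · exact continuous_const
      · apply continuous_finset_prod
        intro i _
        by_cases h : (i : ℕ) < r0 <;> simp only [h, if_true, if_false]
        · exact continuous_const.sub continuous_id
        · exact continuous_const
    have := (hc.continuousAt (x := (1:ℝ))).continuousWithinAt
      (s := Set.Icc (0:ℝ) 1)
    have key := bernoulliSumTail_at_one K r r0 hr0r hrK β
    simpa [ContinuousWithinAt, key] using this
  · intro r1 r2 h1 h2 h3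
    exact binomTail_strict_anti (K - r0) (r1 - r0) (r2 - r0) (by omega) (by omega) hβ
end

section
/- Fix K, r and β ∈ (0,1). The limiting power c(r_0) = P(BIN(K - r_0, β) ≥ r - r_0) (with the convention that the probability is 1 when r - r_0 ≤ 0) is a nondecreasing function of r_0 for 0 ≤ r_0 ≤ K, and equals 1 exactly when r_0 ≥ r. -/
lemma binomTail_zero (n : ℕ) (q : ℝ) : binomTail n q 0 = 1 := by
  unfold binomTail
  rw [show Finset.Icc 0 n = Finset.range (n+1) by ext x; simp [Nat.lt_succ_iff]]
  have h : ∀ i ∈ Finset.range (n+1),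
      (n.choose i : ℝ) * q ^ i * (1 - q) ^ (n - i)
        = q ^ i * (1 - q) ^ (n - i) * (n.choose i : ℝ) := by
    intro i _; ring
  rw [Finset.sum_congr rfl h, ← add_pow]
  norm_num

lemma binomTail_anti (n : ℕ) (q : ℝ) (h0 : 0 ≤ q) (h1 : q ≤ 1) {m m' : ℕ}
    (h : m ≤ m') : binomTail n q m' ≤ binomTail n q m := by
  apply Finset.sum_le_sum_of_subset_of_nonneg (Finset.Icc_subset_Icc_left h)
  intro i _ _
  have h1' : (0:ℝ) ≤ 1 - q := by linarith
  positivity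

lemma binomTail_rec (n m : ℕ) (q : ℝ) (hmn : m ≤ n) :
    binomTail (n+1) q (m+1)
      = q * binomTail n q m + (1 - q) * binomTail n q (m+1) := by
  unfold binomTail
  rw [← Finset.map_add_right_Icc m n 1, Finset.sum_map]
  simp only [addRightEmbedding_apply]
  have hsplit : ∀ j ∈ Finset.Icc m n,
      ((n+1).choose (j+1) : ℝ) * q ^ (j+1) * (1 - q) ^ (n+1 - (j+1))
        = q * ((n.choose j : ℝ) * q ^ j * (1 - q) ^ (n - j))
          + (n.choose (j+1) : ℝ) * q ^ (j+1) * (1 - q) ^ (n - j) := by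
    intro j _
    rw [Nat.succ_sub_succ, Nat.choose_succ_succ]
    push_cast
    ring
  rw [Finset.sum_congr rfl hsplit, Finset.sum_add_distrib, ← Finset.mul_sum]
  congr 1
  -- remaining: ∑ j ∈ Icc m n, C(n,j+1) q^(j+1) (1-q)^(n-j) = (1-q) * ∑ i ∈ Icc (m+1) n, ...
  rcases eq_or_lt_of_le hmn with rfl | hlt
  · simp [Nat.choose_succ_self]
  · obtain ⟨n', rfl⟩ : ∃ n', n = n' + 1 := ⟨n - 1, by omega⟩
    rw [Finset.sum_Icc_succ_top (by omega : m ≤ n' + 1)]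
    rw [Nat.choose_succ_self]
    rw [← Finset.map_add_right_Icc m n' 1, Finset.sum_map]
    simp only [addRightEmbedding_apply]
    rw [Finset.mul_sum]
    push_cast
    simp only [zero_mul, add_zero]
    apply Finset.sum_congr rfl
    intro j hj
    simp only [Finset.mem_Icc] at hj
    have h2 : n' + 1 - j = (n' - j) + 1 := by omega
    rw [h2, pow_succ]
    ring

lemma binomTail_step (n m : ℕ) (q : ℝ) (h0 : 0 ≤ q) (h1 : q ≤ 1) (hmn : m ≤ n) :
    binomTail (n+1) q (m+1) ≤ binomTail n q m := by
  rw [binomTail_rec n m q hmn]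
  have h2 : binomTail n q (m+1) ≤ binomTail n q m :=
    binomTail_anti n q h0 h1 (Nat.le_succ m)
  nlinarith [binomTail_anti n q h0 h1 (Nat.le_succ m)]

lemma binomTail_lt_one_s9 (n m : ℕ) (q : ℝ) (h0 : 0 < q) (h1 : q < 1)
    (hm : 1 ≤ m) : binomTail n q m < 1 := by
  have h2 : binomTail n q m ≤ binomTail n q 1 :=
    binomTail_anti n q h0.le h1.le hm
  have h3 : binomTail n q 0 = (n.choose 0 : ℝ) * q ^ 0 * (1 - q) ^ (n - 0)
      + binomTail n q 1 := by
    unfold binomTail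
    rw [show Finset.Icc 0 n = insert 0 (Finset.Icc 1 n) by
      ext x; simp [Nat.lt_succ_iff]; omega]
    rw [Finset.sum_insert (by simp)]
  have h4 : (0:ℝ) < (1 - q) ^ (n - 0) := pow_pos (by linarith) _
  have h5 := binomTail_zero n q
  simp only [Nat.choose_zero_right, Nat.cast_one, pow_zero, one_mul] at h3
  linarith

/-- Lemma 1: for fixed `K`, `r` and `β ∈ (0,1)`, the limiting power
`c(r0) = P(BIN(K - r0, β) ≥ r - r0)` (with the convention that it is `1` when
`r - r0 ≤ 0`, handled by natural subtraction) is nondecreasing in `r0` on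
`0 ≤ r0 ≤ K`, and equals `1` exactly when `r0 ≥ r`. -/
theorem rop_limiting_power_monotone
    (K r : ℕ) (hr : 1 ≤ r) (hrK : r ≤ K) (β : ℝ) (hβ : β ∈ Set.Ioo (0:ℝ) 1) :
    (∀ r0 r0' : ℕ, r0 ≤ r0' → r0' ≤ K →
      binomTail (K - r0) β (r - r0) ≤ binomTail (K - r0') β (r - r0')) ∧
    (∀ r0 : ℕ, r0 ≤ K → (binomTail (K - r0) β (r - r0) = 1 ↔ r ≤ r0)) := by
  obtain ⟨hβ0, hβ1⟩ := hβ
  have step : ∀ s : ℕ, s + 1 ≤ K →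
      binomTail (K - s) β (r - s) ≤ binomTail (K - (s+1)) β (r - (s+1)) := by
    intro s hs
    by_cases hrs : r ≤ s
    · have e1 : r - s = 0 := by omega
      have e2 : r - (s+1) = 0 := by omega
      rw [e1, e2, binomTail_zero, binomTail_zero]
    · push_neg at hrs
      have e1 : K - s = (K - (s+1)) + 1 := by omega
      have e2 : r - s = (r - (s+1)) + 1 := by omega
      rw [e1, e2]
      exact binomTail_step _ _ β hβ0.le hβ1.le (by omega)
  constructor
  · intro r0 r0' hle hK
    rcases Nat.exists_eq_add_of_le hle with ⟨d, rfl⟩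
    clear hle
    induction d with
    | zero => simp
    | succ d ih =>
      have h1 : r0 + d ≤ K := by omega
      calc binomTail (K - r0) β (r - r0)
          ≤ binomTail (K - (r0 + d)) β (r - (r0 + d)) := ih (by omega)
        _ ≤ binomTail (K - (r0 + d + 1)) β (r - (r0 + d + 1)) := by
            have := step (r0 + d) (by omega)
            simpa using this
  · intro r0 hK
    constructor
    · intro h1
      by_contra hlt
      push_neg at hlt
      have hm : 1 ≤ r - r0 := by omega
      have := binomTail_lt_one_s9 (K - r0) (r - r0) β hβ0 hβ1 hm
      linarith
    · intro h
      have e : r - r0 = 0 := by omega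
      rw [e, binomTail_zero]
end
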